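/- Weak gauge duality: if x is strongly feasible for the primal gauge problem min{κ(x) : x ∈ X} (i.e., x ∈ X and κ(x) < +∞) and y is strongly feasible for the gauge dual min{κ°(y) : y ∈ X'}, then κ(x)·κ°(y) ≥ 1. -/
import Mathlib

open scoped RealInnerProductSpace

/-- A gauge function on ℝⁿ: nonnegative, convex, positively homogeneous, vanishing at 0. -/
def IsGauge {n : ℕ} (κ : EuclideanSpace ℝ (Fin n) → EReal) : Prop :=
  (∀ x, 0 ≤ κ x) ∧
  (∀ x y : EuclideanSpace ℝ (Fin n), ∀ a b : ℝ, 0 ≤ a → 0 ≤ b → a + b = 1 →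
    κ (a • x + b • y) ≤ (a : EReal) * κ x + (b : EReal) * κ y) ∧
  (∀ (c : ℝ) (x : EuclideanSpace ℝ (Fin n)), 0 < c → κ (c • x) = (c : EReal) * κ x) ∧
  κ 0 = 0

/-- The polar of a gauge: κ°(y) = inf {μ > 0 : ⟨x,y⟩ ≤ μ κ(x) for all x}. -/
noncomputable def gaugePolar {n : ℕ} (κ : EuclideanSpace ℝ (Fin n) → EReal)
    (y : EuclideanSpace ℝ (Fin n)) : EReal :=
  sInf {t : EReal | ∃ μ : ℝ, 0 < μ ∧ t = (μ : EReal) ∧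
    ∀ x : EuclideanSpace ℝ (Fin n), ((⟪x, y⟫ : ℝ) : EReal) ≤ (μ : EReal) * κ x}

/-- The antipolar of a set X ⊆ ℝⁿ: X' = {y : ⟨x,y⟩ ≥ 1 for all x ∈ X}. -/
def antipolar {n : ℕ} (X : Set (EuclideanSpace ℝ (Fin n))) : Set (EuclideanSpace ℝ (Fin n)) :=
  {y | ∀ x ∈ X, 1 ≤ (⟪x, y⟫ : ℝ)}

/-- Weak gauge duality. -/
theorem weak_gauge_duality {n : ℕ} (κ : EuclideanSpace ℝ (Fin n) → EReal)
    (hκ : IsGauge κ) (X : Set (EuclideanSpace ℝ (Fin n)))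
    (hXc : IsClosed X) (hXconv : Convex ℝ X)
    (x y : EuclideanSpace ℝ (Fin n))
    (hx : x ∈ X) (hxfin : κ x ≠ ⊤)
    (hy : y ∈ antipolar X) (hyfin : gaugePolar κ y ≠ ⊤) :
    1 ≤ κ x * gaugePolar κ y := by
  have hxy : (1 : ℝ) ≤ ⟪x, y⟫ := hy x hx
  set S : Set EReal := {t : EReal | ∃ μ : ℝ, 0 < μ ∧ t = (μ : EReal) ∧
    ∀ x : EuclideanSpace ℝ (Fin n), ((⟪x, y⟫ : ℝ) : EReal) ≤ (μ : EReal) * κ x} with hSdef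
  have key : ∀ μ : ℝ, 0 < μ → ((μ : EReal) ∈ S) → (1 : EReal) ≤ (μ : EReal) * κ x := by
    intro μ hμ hmem
    obtain ⟨μ', _, hμeq, hforall⟩ := hmem
    calc (1 : EReal) ≤ ((⟪x, y⟫ : ℝ) : EReal) := by exact_mod_cast hxy
      _ ≤ (μ' : EReal) * κ x := hforall x
      _ = (μ : EReal) * κ x := by rw [← hμeq]
  -- κ x ≠ 0
  have hκpos : 0 < κ x := by
    rcases lt_or_eq_of_le (hκ.1 x) with h | h
    · exact h
    · exfalso
      apply hyfin
      have hSempty : S = ∅ := by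
        ext t
        simp only [Set.mem_empty_iff_false, iff_false]
        rintro ⟨μ, hμ, rfl, hforall⟩
        have h1 : ((⟪x, y⟫ : ℝ) : EReal) ≤ (μ : EReal) * κ x := hforall x
        rw [← h, mul_zero] at h1
        have : (1 : EReal) ≤ 0 := le_trans (by exact_mod_cast hxy) h1
        exact absurd this (by norm_num)
      show sInf S = ⊤
      rw [hSempty, sInf_empty]
  -- κ x is a positive real
  have hbot : κ x ≠ ⊥ := fun h => by simp [h] at hκpos
  set c : ℝ := (κ x).toReal with hc
  have hcoe : (c : EReal) = κ x := EReal.coe_toReal hxfin hbot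
  have hcpos : 0 < c := by
    have := hκpos
    rw [← hcoe] at this
    exact_mod_cast this
  -- sInf S ≥ 1/c
  have hinf : ((c⁻¹ : ℝ) : EReal) ≤ sInf S := by
    apply le_sInf
    rintro t ⟨μ, hμ, rfl, hforall⟩
    have h1 : (1 : EReal) ≤ (μ : EReal) * κ x := key μ hμ ⟨μ, hμ, rfl, hforall⟩
    rw [← hcoe, ← EReal.coe_mul] at h1
    have h1' : (1 : ℝ) ≤ μ * c := by exact_mod_cast h1
    have : c⁻¹ ≤ μ := by
      rw [inv_le_iff_one_le_mul₀ hcpos]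
      linarith [mul_comm μ c]
    exact_mod_cast this
  have hmul : (c : EReal) * ((c⁻¹ : ℝ) : EReal) ≤ (c : EReal) * sInf S :=
    mul_le_mul_of_nonneg_left hinf (by exact_mod_cast hcpos.le)
  calc (1 : EReal) = (c : EReal) * ((c⁻¹ : ℝ) : EReal) := by
        rw [← EReal.coe_mul, mul_inv_cancel₀ (ne_of_gt hcpos)]; rfl
    _ ≤ (c : EReal) * sInf S := hmul
    _ = κ x * gaugePolar κ y := by rw [hcoe]; rfl
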